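/- Let G be a complete graph with non-degenerate measure m satisfying CD(K,∞). Then for any finitely supported f and t ≥ 0, Γ(P_t f) belongs to the form domain D(Q), i.e. ‖Γ(Γ(P_t f))‖_{ℓ¹(V,m)} < ∞. -/

import Mathlib

open scoped BigOperators
open Filter

/-- The carré du champ operator. -/
noncomputable def gam {V : Type*} (m : V → ℝ) (μ : V → V → ℝ) (f g : V → ℝ) (x : V) : ℝ :=
  (1 / (2 * m x)) * ∑' y, μ x y * (f y - f x) * (g y - g x)

/-- The formal graph Laplacian. -/
noncomputable def lap {V : Type*} (m : V → ℝ) (μ : V → V → ℝ) (f : V → ℝ) (x : V) : ℝ :=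
  (1 / m x) * ∑' y, μ x y * (f y - f x)

/-- The Dirichlet energy `Q(f) = (1/2) ∑_{x,y} μ_{xy} (f y - f x)²`. -/
noncomputable def QN {V : Type*} (μ : V → V → ℝ) (f : V → ℝ) : ℝ :=
  (1 / 2) * ∑' p : V × V, μ p.1 p.2 * (f p.2 - f p.1) ^ 2

/-- The `ℓ²(V,m)` norm. -/
noncomputable def l2n {V : Type*} (m : V → ℝ) (f : V → ℝ) : ℝ :=
  Real.sqrt (∑' x, f x ^ 2 * m x)

/-- The iterated carré du champ `Γ₂(f) = (1/2) Δ Γ(f) - Γ(f, Δ f)`. -/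
noncomputable def gam2 {V : Type*} (m : V → ℝ) (μ : V → V → ℝ) (f : V → ℝ) (x : V) : ℝ :=
  (1 / 2) * lap m μ (fun y => gam m μ f f y) x - gam m μ f (lap m μ f) x

open Function

/-!
Green's formula and a pointwise sum-of-squares bound give, for finitely supported `h`, the
Caccioppoli inequality `∑ h² Γ(g) m ≤ -2 ∑ h² g Δg m + 4 ∑ g² Γ(h) m`. Along cut-offs with
`Γ(χ_k) ≤ 1/k` and `χ_k → 1`, it shows that `Γ(g) ∈ ℓ¹(m)` whenever `g ∈ ℓ²(m)` and `-g Δg m` is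
dominated by a summable function, in particular whenever `g, Δg ∈ ℓ²(m)`.

For `u = P_t f` the functions `u`, `Δu = P_t Δf` and `Δ²u = P_t Δ²f` lie in `ℓ²(m)`, hence
`Γ(u), Γ(Δu) ∈ ℓ¹(m)`; as `inf m > 0` they are bounded, so `Γ(u) ∈ ℓ²(m)`. Finally `CD(K,∞)`
together with `-2Γ(u, Δu) ≤ Γ(u) + Γ(Δu)` gives `-ΔΓ(u) ≤ (2|K| + 1) Γ(u) + Γ(Δu)`, so
`-Γ(u) ΔΓ(u) m` is dominated by a summable function and the criterion applies to `g = Γ(u)`.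
-/

section WeightedGraph

variable {V : Type*} {m : V → ℝ} {μ : V → V → ℝ}

lemma summable_weight_mul (hlf : ∀ x, (support (μ x)).Finite) (x : V) (F : V → ℝ) :
    Summable fun y => μ x y * F y :=
  summable_of_hasFiniteSupport <| (hlf x).subset (support_mul_subset_left _ _)

lemma tsum_eq_mul_lap {x : V} (hm : m x ≠ 0) (g : V → ℝ) :
    ∑' y, μ x y * (g y - g x) = m x * lap m μ g x := by
  unfold lap
  field_simp

lemma tsum_eq_two_mul_gam {x : V} (hm : m x ≠ 0) (f g : V → ℝ) :
    ∑' y, μ x y * ((f y - f x) * (g y - g x)) = 2 * m x * gam m μ f g x := by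
  unfold gam
  simp only [← mul_assoc]
  field_simp

lemma gam_nonneg {x : V} (hm : 0 ≤ m x) (hnn : ∀ y, 0 ≤ μ x y) (f : V → ℝ) :
    0 ≤ gam m μ f f x :=
  mul_nonneg (by positivity) (tsum_nonneg fun y => by
    rw [mul_assoc]; exact mul_nonneg (hnn y) (mul_self_nonneg _))

lemma neg_two_mul_gam_le {x : V} (hm : 0 < m x) (hnn : ∀ y, 0 ≤ μ x y)
    (hlf : ∀ x, (support (μ x)).Finite) (a b : V → ℝ) :
    -(2 * gam m μ a b x) ≤ gam m μ a a x + gam m μ b b x := by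
  have hs (f g : V → ℝ) :=
    (summable_weight_mul hlf x fun y => (f y - f x) * (g y - g x)).hasSum
  have := (((hs a a).add (hs b b)).add ((hs a b).mul_left 2)).nonneg fun y => by
    nlinarith [mul_nonneg (hnn y) (sq_nonneg (a y - a x + (b y - b x)))]
  simp only [tsum_eq_two_mul_gam hm.ne'] at this
  nlinarith

lemma gam_comp_le {x : V} (hm : 0 ≤ m x) (hnn : ∀ y, 0 ≤ μ x y)
    (hlf : ∀ x, (support (μ x)).Finite) {φ : ℝ → ℝ} (hφ : LipschitzWith 1 φ) (a : V → ℝ) :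
    gam m μ (φ ∘ a) (φ ∘ a) x ≤ gam m μ a a x := by
  refine mul_le_mul_of_nonneg_left ?_ (by positivity)
  refine Summable.tsum_le_tsum (fun y => ?_) ?_ ?_
  · have h := hφ.dist_le_mul (a y) (a x)
    simp only [NNReal.coe_one, one_mul, Real.dist_eq] at h
    have hsq : (φ (a y) - φ (a x)) * (φ (a y) - φ (a x)) ≤ (a y - a x) * (a y - a x) := by
      rw [← abs_mul_abs_self, ← abs_mul_abs_self (a y - a x)]
      exact mul_self_le_mul_self (abs_nonneg _) h
    simpa only [comp_apply, mul_assoc] using mul_le_mul_of_nonneg_left hsq (hnn y)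
  · simpa only [comp_apply, mul_assoc] using
      summable_weight_mul hlf x fun y => (φ (a y) - φ (a x)) * (φ (a y) - φ (a x))
  · simpa only [mul_assoc] using summable_weight_mul hlf x fun y => (a y - a x) * (a y - a x)

lemma finite_setOf_edge_meeting (hsym : ∀ x y, μ x y = μ y x)
    (hlf : ∀ x, (support (μ x)).Finite) {S : Set V} (hS : S.Finite) :
    {p : V × V | μ p.1 p.2 ≠ 0 ∧ (p.1 ∈ S ∨ p.2 ∈ S)}.Finite := by
  have hT : (S ∪ ⋃ x ∈ S, support (μ x)).Finite := hS.union (hS.biUnion fun x _ => hlf x)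
  refine (hT.prod hT).subset ?_
  rintro ⟨x, y⟩ ⟨hxy, hx | hy⟩
  · exact ⟨Or.inl hx, Or.inr (Set.mem_biUnion hx hxy)⟩
  · exact ⟨Or.inr (Set.mem_biUnion hy (by rwa [mem_support, hsym])), Or.inl hy⟩

lemma summable_edge (hsym : ∀ x y, μ x y = μ y x) (hlf : ∀ x, (support (μ x)).Finite)
    {S : Set V} (hS : S.Finite) {F : V × V → ℝ} (hF : ∀ p, p.1 ∉ S → p.2 ∉ S → F p = 0) :
    Summable fun p : V × V => μ p.1 p.2 * F p := by
  refine summable_of_hasFiniteSupport <| (finite_setOf_edge_meeting hsym hlf hS).subset ?_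
  intro p hp
  refine ⟨left_ne_zero_of_mul hp, ?_⟩
  by_contra! h
  exact right_ne_zero_of_mul hp (hF p h.1 h.2)

lemma finite_support_lap (hsym : ∀ x y, μ x y = μ y x) (hlf : ∀ x, (support (μ x)).Finite)
    {f : V → ℝ} (hf : (support f).Finite) : (support (lap m μ f)).Finite := by
  refine ((finite_setOf_edge_meeting hsym hlf hf).image Prod.fst).subset fun x hx => ?_
  obtain ⟨y, hy⟩ : ∃ y, μ x y * (f y - f x) ≠ 0 := by
    by_contra! h
    exact hx (by simp [lap, h])
  refine ⟨(x, y), ⟨left_ne_zero_of_mul hy, ?_⟩, rfl⟩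
  by_contra! h
  simp only [mem_support, not_not] at h
  exact hy (by simp [h.1, h.2])

lemma tsum_edge_swap (hsym : ∀ x y, μ x y = μ y x) (F : V × V → ℝ) :
    ∑' p : V × V, μ p.1 p.2 * F p.swap = ∑' p : V × V, μ p.1 p.2 * F p :=
  (tsum_congr fun p => by simp [hsym p.1]).trans
    ((Equiv.prodComm V V).tsum_eq fun p => μ p.1 p.2 * F p)

lemma tsum_edge_sq_mul_left (hm : ∀ x, m x ≠ 0) (a w : V → ℝ)
    (hs : Summable fun p : V × V => μ p.1 p.2 * ((a p.2 - a p.1) ^ 2 * w p.1)) :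
    ∑' p : V × V, μ p.1 p.2 * ((a p.2 - a p.1) ^ 2 * w p.1)
      = 2 * ∑' x, w x * gam m μ a a x * m x := by
  rw [hs.tsum_prod, ← tsum_mul_left]
  refine tsum_congr fun x => ?_
  calc ∑' y, μ x y * ((a y - a x) ^ 2 * w x)
      = (∑' y, μ x y * ((a y - a x) * (a y - a x))) * w x := by
        rw [← tsum_mul_right]; exact tsum_congr fun y => by ring
    _ = 2 * (w x * gam m μ a a x * m x) := by rw [tsum_eq_two_mul_gam (hm x)]; ring

theorem green_formula (hm : ∀ x, m x ≠ 0) (hsym : ∀ x y, μ x y = μ y x)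
    (hlf : ∀ x, (support (μ x)).Finite) (g : V → ℝ) {ζ : V → ℝ} (hζ : (support ζ).Finite) :
    ∑' p : V × V, μ p.1 p.2 * ((g p.2 - g p.1) * (ζ p.2 - ζ p.1))
      = -2 * ∑' x, ζ x * lap m μ g x * m x := by
  set A : V × V → ℝ := fun p => (g p.2 - g p.1) * ζ p.1
  have hA : Summable fun p : V × V => μ p.1 p.2 * A p :=
    summable_edge hsym hlf hζ fun p h1 _ => by simp [A, notMem_support.1 h1]
  have hA' : Summable fun p : V × V => μ p.1 p.2 * A p.swap :=
    summable_edge hsym hlf hζ fun p _ h2 => by simp [A, notMem_support.1 h2]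
  have hAval : ∑' p : V × V, μ p.1 p.2 * A p = ∑' x, ζ x * lap m μ g x * m x := by
    rw [hA.tsum_prod]
    refine tsum_congr fun x => ?_
    calc ∑' y, μ x y * A (x, y) = (∑' y, μ x y * (g y - g x)) * ζ x := by
          rw [← tsum_mul_right]; exact tsum_congr fun y => by simp only [A]; ring
      _ = ζ x * lap m μ g x * m x := by rw [tsum_eq_mul_lap (hm x)]; ring
  calc ∑' p : V × V, μ p.1 p.2 * ((g p.2 - g p.1) * (ζ p.2 - ζ p.1))
      = -(∑' p : V × V, μ p.1 p.2 * A p.swap + ∑' p : V × V, μ p.1 p.2 * A p) := by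
        rw [← hA'.tsum_add hA, ← tsum_neg]
        exact tsum_congr fun p => by simp only [A, Prod.fst_swap, Prod.snd_swap]; ring
    _ = -2 * ∑' x, ζ x * lap m μ g x * m x := by rw [tsum_edge_swap hsym, hAval]; ring

theorem caccioppoli (hm : ∀ x, m x ≠ 0) (hsym : ∀ x y, μ x y = μ y x)
    (hnn : ∀ x y, 0 ≤ μ x y) (hlf : ∀ x, (support (μ x)).Finite)
    {h : V → ℝ} (hh : (support h).Finite) (g : V → ℝ) :
    ∑' x, h x ^ 2 * gam m μ g g x * m x
      ≤ -2 * ∑' x, h x ^ 2 * g x * lap m μ g x * m x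
        + 4 * ∑' x, g x ^ 2 * gam m μ h h x * m x := by
  have hvan {F : V × V → ℝ} (hF : ∀ p, h p.1 = 0 → h p.2 = 0 → F p = 0) :
      Summable fun p : V × V => μ p.1 p.2 * F p :=
    summable_edge hsym hlf hh fun p h1 h2 => hF p (notMem_support.1 h1) (notMem_support.1 h2)
  set Fg : V × V → ℝ := fun p => (g p.2 - g p.1) ^ 2 * h p.1 ^ 2
  set Fh : V × V → ℝ := fun p => (h p.2 - h p.1) ^ 2 * g p.1 ^ 2
  set Fζ : V × V → ℝ := fun p => (g p.2 - g p.1) * (h p.2 ^ 2 * g p.2 - h p.1 ^ 2 * g p.1)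
  have hFg : Summable fun p : V × V => μ p.1 p.2 * Fg p :=
    hvan fun p h1 _ => by simp [Fg, h1]
  have hFg' : Summable fun p : V × V => μ p.1 p.2 * Fg p.swap :=
    hvan fun p _ h2 => by simp [Fg, h2]
  have hFh : Summable fun p : V × V => μ p.1 p.2 * Fh p :=
    hvan fun p h1 h2 => by simp [Fh, h1, h2]
  have hFh' : Summable fun p : V × V => μ p.1 p.2 * Fh p.swap :=
    hvan fun p h1 h2 => by simp [Fh, h1, h2]
  have hFζ : Summable fun p : V × V => μ p.1 p.2 * Fζ p :=
    hvan fun p h1 h2 => by simp [Fζ, h1, h2]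
  have hedge : ∀ p : V × V, μ p.1 p.2 * Fg p / 4 + μ p.1 p.2 * Fg p.swap / 4
      - μ p.1 p.2 * Fh p - μ p.1 p.2 * Fh p.swap ≤ μ p.1 p.2 * Fζ p := by
    rintro ⟨x, y⟩
    have key : (g y - g x) ^ 2 * (h x ^ 2 + h y ^ 2) / 4 - (h y - h x) ^ 2 * (g x ^ 2 + g y ^ 2)
        ≤ (g y - g x) * (h y ^ 2 * g y - h x ^ 2 * g x) := by
      linear_combination
        (1 / 8) * sq_nonneg ((g y - g x) * (h x + h y) + 2 * (h y - h x) * (g x + g y))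
          + (5 / 8) * sq_nonneg ((g y - g x) * (h y - h x))
    simp only [Fg, Fh, Fζ, Prod.fst_swap, Prod.snd_swap]
    linear_combination mul_le_mul_of_nonneg_left key (hnn x y)
  have hsum := hasSum_le hedge ((((hFg.hasSum.div_const 4).add (hFg'.hasSum.div_const 4)).sub
    hFh.hasSum).sub hFh'.hasSum) hFζ.hasSum
  have hζ : (support fun x => h x ^ 2 * g x).Finite :=
    hh.subset fun x hx h0 => hx (by simp [h0])
  rw [tsum_edge_swap hsym Fg, tsum_edge_swap hsym Fh,
    tsum_edge_sq_mul_left hm g (fun x => h x ^ 2) hFg,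
    tsum_edge_sq_mul_left hm h (fun x => g x ^ 2) hFh, green_formula hm hsym hlf g hζ] at hsum
  linarith

variable (m μ) in
structure IsCutoffSeq (χ : ℕ → V → ℝ) : Prop where
  finite_support : ∀ k, (support (χ k)).Finite
  nonneg : ∀ k x, 0 ≤ χ k x
  le_one : ∀ k x, χ k x ≤ 1
  gam_le : ∀ k x, 1 ≤ k → gam m μ (χ k) (χ k) x ≤ 1 / (k : ℝ)
  tendsto : ∀ x, Tendsto (fun k => χ k x) atTop (nhds 1)

lemma isCutoffSeq_clamp (hm : ∀ x, 0 ≤ m x) (hnn : ∀ x y, 0 ≤ μ x y)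
    (hlf : ∀ x, (support (μ x)).Finite) {η : ℕ → V → ℝ}
    (hfin : ∀ k, (support (η k)).Finite)
    (hlim : ∀ x, Tendsto (fun k => η k x) atTop (nhds 1))
    (hgam : ∀ k x, 1 ≤ k → gam m μ (η k) (η k) x ≤ 1 / (k : ℝ)) :
    IsCutoffSeq m μ fun k x => max (min (η k x) 1) 0 where
  finite_support k := (hfin k).subset fun x hx h0 => hx (by simp [h0])
  nonneg _ _ := le_max_right _ _
  le_one _ _ := max_le (min_le_right _ _) zero_le_one
  gam_le k x hk :=
    (gam_comp_le (hm x) (hnn x) hlf ((LipschitzWith.id.min_const 1).max_const 0) (η k)).trans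
      (hgam k x hk)
  tendsto x := by
    simpa using ((hlim x).min (tendsto_const_nhds (x := 1))).max (tendsto_const_nhds (x := 0))

lemma IsCutoffSeq.sq_mul_le {χ : ℕ → V → ℝ} (hχ : IsCutoffSeq m μ χ) (k : ℕ) (x : V)
    {a b : ℝ} (hab : a ≤ b) (hb : 0 ≤ b) : χ k x ^ 2 * a ≤ b := by
  have h0 := hχ.nonneg k x
  have h1 := hχ.le_one k x
  nlinarith [mul_le_mul_of_nonneg_left hab (sq_nonneg (χ k x)), mul_le_mul_of_nonneg_right
    (pow_le_one₀ h0 h1 : χ k x ^ 2 ≤ 1) hb]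

theorem IsCutoffSeq.tsum_sq_mul_gam_mul_le {χ : ℕ → V → ℝ} (hχ : IsCutoffSeq m μ χ)
    (hm : ∀ x, 0 < m x) (hsym : ∀ x y, μ x y = μ y x) (hnn : ∀ x y, 0 ≤ μ x y)
    (hlf : ∀ x, (support (μ x)).Finite) {g : V → ℝ} (hg : Summable fun x => g x ^ 2 * m x)
    {R : V → ℝ} (hR0 : ∀ x, 0 ≤ R x) (hR : Summable R)
    (hgR : ∀ x, -(g x * lap m μ g x * m x) ≤ R x) {k : ℕ} (hk : 1 ≤ k) :
    ∑' x, χ k x ^ 2 * gam m μ g g x * m x ≤ 2 * ∑' x, R x + 4 * ∑' x, g x ^ 2 * m x := by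
  have hlap : -∑' x, χ k x ^ 2 * g x * lap m μ g x * m x ≤ ∑' x, R x := by
    rw [← tsum_neg]
    refine Summable.tsum_le_tsum (fun x => ?_) ?_ hR
    · simpa only [mul_assoc, neg_mul_eq_mul_neg] using hχ.sq_mul_le k x (hgR x) (hR0 x)
    · exact (summable_of_hasFiniteSupport <|
        (hχ.finite_support k).subset fun x hx h0 => hx (by simp [h0])).neg
  have hcut : ∑' x, g x ^ 2 * gam m μ (χ k) (χ k) x * m x ≤ ∑' x, g x ^ 2 * m x := by
    have hle x : g x ^ 2 * gam m μ (χ k) (χ k) x * m x ≤ g x ^ 2 * m x := by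
      have := (hχ.gam_le k x hk).trans (div_le_one_of_le₀ (by exact_mod_cast hk) (by positivity))
      have := mul_nonneg (sq_nonneg (g x)) (hm x).le
      nlinarith
    refine Summable.tsum_le_tsum hle (hg.of_nonneg_of_le (fun x => ?_) hle) hg
    exact mul_nonneg (mul_nonneg (sq_nonneg _) (gam_nonneg (hm x).le (hnn x) _)) (hm x).le
  linarith [caccioppoli (fun x => (hm x).ne') hsym hnn hlf (hχ.finite_support k) g]

theorem IsCutoffSeq.summable_gam_mul {χ : ℕ → V → ℝ} (hχ : IsCutoffSeq m μ χ)
    (hm : ∀ x, 0 < m x) (hsym : ∀ x y, μ x y = μ y x) (hnn : ∀ x y, 0 ≤ μ x y)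
    (hlf : ∀ x, (support (μ x)).Finite) {g : V → ℝ} (hg : Summable fun x => g x ^ 2 * m x)
    {R : V → ℝ} (hR0 : ∀ x, 0 ≤ R x) (hR : Summable R)
    (hgR : ∀ x, -(g x * lap m μ g x * m x) ≤ R x) :
    Summable fun x => gam m μ g g x * m x := by
  have hΓ x : 0 ≤ gam m μ g g x * m x := mul_nonneg (gam_nonneg (hm x).le (hnn x) g) (hm x).le
  refine summable_of_sum_le (c := 2 * ∑' x, R x + 4 * ∑' x, g x ^ 2 * m x) hΓ fun u => ?_
  have hlim : Tendsto (fun k => ∑ x ∈ u, χ k x ^ 2 * gam m μ g g x * m x) atTop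
      (nhds (∑ x ∈ u, gam m μ g g x * m x)) :=
    tendsto_finsetSum u fun x _ => by
      simpa [mul_assoc] using ((hχ.tendsto x).pow 2).mul_const (gam m μ g g x * m x)
  refine le_of_tendsto hlim ((eventually_ge_atTop 1).mono fun k hk => ?_)
  refine (Summable.sum_le_tsum u (fun x _ => ?_) ?_).trans
    (hχ.tsum_sq_mul_gam_mul_le hm hsym hnn hlf hg hR0 hR hgR hk)
  · rw [mul_assoc]
    exact mul_nonneg (sq_nonneg _) (hΓ x)
  · exact summable_of_hasFiniteSupport <|
      (hχ.finite_support k).subset fun x hx h0 => hx (by simp [h0])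

theorem IsCutoffSeq.summable_gam_mul_of_lap {χ : ℕ → V → ℝ} (hχ : IsCutoffSeq m μ χ)
    (hm : ∀ x, 0 < m x) (hsym : ∀ x y, μ x y = μ y x) (hnn : ∀ x y, 0 ≤ μ x y)
    (hlf : ∀ x, (support (μ x)).Finite) {g : V → ℝ} (hg : Summable fun x => g x ^ 2 * m x)
    (hlap : Summable fun x => lap m μ g x ^ 2 * m x) :
    Summable fun x => gam m μ g g x * m x :=
  hχ.summable_gam_mul hm hsym hnn hlf hg
    (R := fun x => (g x ^ 2 * m x + lap m μ g x ^ 2 * m x) / 2)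
    (fun x => by have := (hm x).le; positivity) ((hg.add hlap).div_const 2)
    fun x => by nlinarith [mul_nonneg (sq_nonneg (g x + lap m μ g x)) (hm x).le]

lemma le_tsum_mul_div_iInf (hm : ∀ x, 0 ≤ m x) (hinf : 0 < ⨅ x, m x) {φ : V → ℝ}
    (hφ : ∀ x, 0 ≤ φ x) (hs : Summable fun x => φ x * m x) (x : V) :
    φ x ≤ (∑' y, φ y * m y) / ⨅ y, m y := by
  rw [le_div_iff₀ hinf]
  calc φ x * ⨅ y, m y ≤ φ x * m x :=
        mul_le_mul_of_nonneg_left (ciInf_le ⟨0, by rintro _ ⟨y, rfl⟩; exact hm y⟩ x) (hφ x)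
    _ ≤ ∑' y, φ y * m y := hs.le_tsum x fun y _ => mul_nonneg (hφ y) (hm y)

lemma summable_mul_mul_of_iInf_pos (hm : ∀ x, 0 ≤ m x) (hinf : 0 < ⨅ x, m x) {φ ψ : V → ℝ}
    (hφ0 : ∀ x, 0 ≤ φ x) (hψ0 : ∀ x, 0 ≤ ψ x) (hφ : Summable fun x => φ x * m x)
    (hψ : Summable fun x => ψ x * m x) :
    Summable fun x => φ x * ψ x * m x :=
  (hψ.mul_left ((∑' y, φ y * m y) / ⨅ y, m y)).of_nonneg_of_le
    (fun x => mul_nonneg (mul_nonneg (hφ0 x) (hψ0 x)) (hm x)) fun x => by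
      rw [mul_assoc]
      exact mul_le_mul_of_nonneg_right (le_tsum_mul_div_iInf hm hinf hφ0 hφ x)
        (mul_nonneg (hψ0 x) (hm x))

lemma summable_sq_mul_of_iInf_pos (hm : ∀ x, 0 ≤ m x) (hinf : 0 < ⨅ x, m x) {φ : V → ℝ}
    (hφ0 : ∀ x, 0 ≤ φ x) (hφ : Summable fun x => φ x * m x) :
    Summable fun x => φ x ^ 2 * m x := by
  simpa only [sq] using summable_mul_mul_of_iInf_pos hm hinf hφ0 hφ0 hφ hφ

lemma neg_lap_gam_le {x : V} (hm : 0 < m x) (hnn : ∀ y, 0 ≤ μ x y)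
    (hlf : ∀ x, (support (μ x)).Finite) {K : ℝ} {u : V → ℝ}
    (hK : K * gam m μ u u x ≤ gam2 m μ u x) :
    -lap m μ (gam m μ u u) x
      ≤ (2 * |K| + 1) * gam m μ u u x + gam m μ (lap m μ u) (lap m μ u) x := by
  have := neg_two_mul_gam_le hm hnn hlf u (lap m μ u)
  have := mul_le_mul_of_nonneg_right (neg_le_abs K) (gam_nonneg hm.le hnn u)
  unfold gam2 at hK
  linarith

theorem IsCutoffSeq.summable_gam_gam_mul {χ : ℕ → V → ℝ} (hχ : IsCutoffSeq m μ χ)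
    (hm : ∀ x, 0 < m x) (hsym : ∀ x y, μ x y = μ y x) (hnn : ∀ x y, 0 ≤ μ x y)
    (hlf : ∀ x, (support (μ x)).Finite) (hinf : 0 < ⨅ x, m x) {K : ℝ} {u : V → ℝ}
    (hK : ∀ x, K * gam m μ u u x ≤ gam2 m μ u x)
    (hu : Summable fun x => gam m μ u u x * m x)
    (hlapu : Summable fun x => gam m μ (lap m μ u) (lap m μ u) x * m x) :
    Summable fun x => gam m μ (gam m μ u u) (gam m μ u u) x * m x := by
  have hm0 x := (hm x).le
  have hΓ x := gam_nonneg (hm0 x) (hnn x) u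
  set ψ : V → ℝ :=
    fun x => (2 * |K| + 1) * gam m μ u u x + gam m μ (lap m μ u) (lap m μ u) x
  have hψ0 x : 0 ≤ ψ x := add_nonneg (mul_nonneg (by positivity) (hΓ x))
    (gam_nonneg (hm0 x) (hnn x) _)
  have hψ : Summable fun x => ψ x * m x :=
    ((hu.mul_left (2 * |K| + 1)).add hlapu).congr fun x => by simp only [ψ]; ring
  refine hχ.summable_gam_mul hm hsym hnn hlf (summable_sq_mul_of_iInf_pos hm0 hinf hΓ hu)
    (fun x => mul_nonneg (mul_nonneg (hΓ x) (hψ0 x)) (hm0 x))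
    (summable_mul_mul_of_iInf_pos hm0 hinf hΓ hψ0 hu hψ) fun x => ?_
  have := mul_le_mul_of_nonneg_right (neg_lap_gam_le (hm x) (hnn x) hlf (hK x))
    (mul_nonneg (hΓ x) (hm0 x))
  linear_combination this

end WeightedGraph

theorem stmt13_general {V : Type*} (m : V → ℝ) (μ : V → V → ℝ)
    (hm : ∀ x, 0 < m x) (hsym : ∀ x y, μ x y = μ y x)
    (hnn : ∀ x y, 0 ≤ μ x y) (hlf : ∀ x, (Function.support (μ x)).Finite)
    (hnd : 0 < ⨅ x, m x)
    -- completeness of the graph: cut-off functions `η_k`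
    (η : ℕ → V → ℝ)
    (hηfin : ∀ k, (Function.support (η k)).Finite)
    (hηlim : ∀ x, Tendsto (fun k => η k x) atTop (nhds 1))
    (hηgam : ∀ k x, 1 ≤ k → gam m μ (η k) (η k) x ≤ 1 / (k : ℝ))
    -- the heat semigroup `P t = e^{tΔ}` and its standard properties
    (P : ℝ → (V → ℝ) → V → ℝ)
    (hPcomm : ∀ f : V → ℝ, (Function.support f).Finite → ∀ t, P t (lap m μ f) = lap m μ (P t f))
    (hPl2 : ∀ f : V → ℝ, Summable (fun x => f x ^ 2 * m x) → ∀ t, 0 ≤ t →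
      Summable (fun x => (P t f x) ^ 2 * m x) ∧ ∑' x, (P t f x) ^ 2 * m x ≤ ∑' x, f x ^ 2 * m x)
    (K : ℝ) (hCD : ∀ (f : V → ℝ) (x : V), K * gam m μ f f x ≤ gam2 m μ f x) :
    ∀ f : V → ℝ, (Function.support f).Finite → ∀ t, 0 ≤ t →
      Summable (fun x => (gam m μ (P t f) (P t f) x) ^ 2 * m x) ∧
      Summable (fun x =>
        gam m μ (fun y => gam m μ (P t f) (P t f) y) (fun y => gam m μ (P t f) (P t f) y) x
          * m x) := by
  intro f hf t ht
  have hχ := isCutoffSeq_clamp (fun x => (hm x).le) hnn hlf hηfin hηlim hηgam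
  have hL2 {g : V → ℝ} (hg : (support g).Finite) : Summable fun x => P t g x ^ 2 * m x :=
    (hPl2 g (summable_of_hasFiniteSupport <| hg.subset fun x hx h0 => hx (by simp [h0])) t ht).1
  have hlapf := finite_support_lap (m := m) hsym hlf hf
  have hlapu : Summable fun x => lap m μ (P t f) x ^ 2 * m x := by
    rw [← hPcomm f hf t]
    exact hL2 hlapf
  have hlaplapu : Summable fun x => lap m μ (lap m μ (P t f)) x ^ 2 * m x := by
    rw [← hPcomm f hf t, ← hPcomm _ hlapf t]
    exact hL2 (finite_support_lap hsym hlf hlapf)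
  have hΓu := hχ.summable_gam_mul_of_lap hm hsym hnn hlf (hL2 hf) hlapu
  have hΓlapu := hχ.summable_gam_mul_of_lap hm hsym hnn hlf hlapu hlaplapu
  exact ⟨summable_sq_mul_of_iInf_pos (fun x => (hm x).le) hnd
      (fun x => gam_nonneg (hm x).le (hnn x) _) hΓu,
    hχ.summable_gam_gam_mul hm hsym hnn hlf hnd (hCD _) hΓu hΓlapu⟩

/-- On a complete graph with non-degenerate measure satisfying `CD(K,∞)`, for finitely
supported `f` and `t ≥ 0`, `Γ(P_t f)` belongs to the form domain `D(Q)`: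
it is in `ℓ²(V,m)` and `‖Γ(Γ(P_t f))‖_{ℓ¹_m} < ∞`. -/
theorem stmt13 {V : Type*} (m : V → ℝ) (μ : V → V → ℝ)
    (hm : ∀ x, 0 < m x) (hsym : ∀ x y, μ x y = μ y x)
    (hnn : ∀ x y, 0 ≤ μ x y) (hlf : ∀ x, (Function.support (μ x)).Finite)
    (hnd : 0 < ⨅ x, m x)
    -- completeness of the graph: cut-off functions `η_k`
    (η : ℕ → V → ℝ)
    (hηfin : ∀ k, (Function.support (η k)).Finite)
    (hηmono : ∀ k x, η k x ≤ η (k + 1) x)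
    (hηlim : ∀ x, Tendsto (fun k => η k x) atTop (nhds 1))
    (hηgam : ∀ k x, 1 ≤ k → gam m μ (η k) (η k) x ≤ 1 / (k : ℝ))
    -- the heat semigroup `P t = e^{tΔ}` and its standard properties
    (P : ℝ → (V → ℝ) → V → ℝ)
    (hP0 : ∀ f, P 0 f = f)
    (hheat : ∀ (f : V → ℝ) (x : V) (t : ℝ), HasDerivAt (fun s => P s f x) (lap m μ (P t f) x) t)
    (hPcomm : ∀ f : V → ℝ, (Function.support f).Finite → ∀ t, P t (lap m μ f) = lap m μ (P t f))
    (hPl2 : ∀ f : V → ℝ, Summable (fun x => f x ^ 2 * m x) → ∀ t, 0 ≤ t →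
      Summable (fun x => (P t f x) ^ 2 * m x) ∧ ∑' x, (P t f x) ^ 2 * m x ≤ ∑' x, f x ^ 2 * m x)
    (hPsym : ∀ f g : V → ℝ, Summable (fun x => f x ^ 2 * m x) →
      Summable (fun x => g x ^ 2 * m x) → ∀ t, 0 ≤ t →
      ∑' x, P t f x * g x * m x = ∑' x, f x * P t g x * m x)
    (hPpos : ∀ f : V → ℝ, (∀ x, 0 ≤ f x) → ∀ t, 0 ≤ t → ∀ x, 0 ≤ P t f x)
    (K : ℝ) (hCD : ∀ (f : V → ℝ) (x : V), K * gam m μ f f x ≤ gam2 m μ f x) :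
    ∀ f : V → ℝ, (Function.support f).Finite → ∀ t, 0 ≤ t →
      Summable (fun x => (gam m μ (P t f) (P t f) x) ^ 2 * m x) ∧
      Summable (fun x =>
        gam m μ (fun y => gam m μ (P t f) (P t f) y) (fun y => gam m μ (P t f) (P t f) y) x
          * m x) :=
  stmt13_general m μ hm hsym hnn hlf hnd η hηfin hηlim hηgam P hPcomm hPl2 K hCD
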